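/- Let A₁, …, A_m ∈ ℝⁿˣⁿ be symmetric matrices such that 𝒜(X) = (m^{−1/2}·⟨Aᵢ, X⟩)_{1≤i≤m} satisfies the 2-RIP with RIP constant δ₂ < 1, let x⋆ ∈ ℝⁿ, and let f(x) = (1/(4m))·Σᵢ (⟨Aᵢ, xxᵀ⟩ − ⟨Aᵢ, x⋆x⋆ᵀ⟩)². Then every critical point x of f (i.e., with ∇f(x) = (1/m)·Σᵢ ⟨Aᵢ, xxᵀ − x⋆x⋆ᵀ⟩·Aᵢx = 0) satisfies ‖(xxᵀ − x⋆x⋆ᵀ)·xxᵀ‖_F ≤ δ₂·‖xxᵀ − x⋆x⋆ᵀ‖_F·‖x‖₂². -/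

import Mathlib

open Matrix

/-- The Euclidean (ℓ₂) norm of a vector in `ℝⁿ`. -/
noncomputable def l2norm {p : ℕ} (v : Fin p → ℝ) : ℝ :=
  Real.sqrt (∑ i, v i ^ 2)

/-- The Frobenius norm of a real matrix. -/
noncomputable def frobNorm {p q : ℕ} (A : Matrix (Fin p) (Fin q) ℝ) : ℝ :=
  Real.sqrt (∑ i, ∑ j, (A i j) ^ 2)

/-- The trace inner product `⟨X, Y⟩ = Tr(XᵀY)` of two real matrices. -/
def mip {p q : ℕ} (A B : Matrix (Fin p) (Fin q) ℝ) : ℝ :=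
  Matrix.trace (Aᵀ * B)

/-!
Let `D = xxᵀ − x⋆x⋆ᵀ` and `M = D xxᵀ = (Dx)xᵀ`. Criticality of `x` says exactly that
`⟨𝒜(D), 𝒜(M)⟩ = 0`, and `D + tM = D(I + t xxᵀ)` has rank at most `2` for every `t`.
Comparing the lower RIP bound at `D + tM` with the upper one at `D − tM`, whose images under `𝒜`
have the same norm, gives `2t⟨D, M⟩ ≤ δ(‖D‖² + t²‖M‖²)` for all `t`, hence
`⟨D, M⟩ ≤ δ‖D‖‖M‖`. Since `⟨D, M⟩ = ‖Dx‖²` and `‖M‖ = ‖Dx‖‖x‖`, this is `‖Dx‖ ≤ δ‖D‖‖x‖`.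
-/

theorem Matrix.rank_add_le {K m n : Type*} [Field K] [Fintype m] [Fintype n]
    (X Y : Matrix m n K) : (X + Y).rank ≤ X.rank + Y.rank := by
  rw [Matrix.rank, Matrix.rank, Matrix.rank, Matrix.mulVecLin_add]
  exact (Submodule.finrank_mono (LinearMap.range_add_le _ _)).trans
    (Submodule.finrank_add_le_finrank_add_finrank _ _)

theorem Matrix.rank_vecMulVec_sub_vecMulVec_le {K m n : Type*} [Field K] [Fintype m] [Fintype n]
    (a c : m → K) (b d : n → K) : (vecMulVec a b - vecMulVec c d).rank ≤ 2 := by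
  rw [sub_eq_add_neg, ← neg_vecMulVec]
  exact (rank_add_le _ _).trans (add_le_add (rank_vecMulVec_le _ _) (rank_vecMulVec_le _ _))

section Frobenius

variable {p q : ℕ}

lemma mip_eq_sum (X Y : Matrix (Fin p) (Fin q) ℝ) : mip X Y = ∑ i, ∑ j, X i j * Y i j := by
  simp only [mip, Matrix.trace, Matrix.diag, Matrix.mul_apply, Matrix.transpose_apply]
  exact Finset.sum_comm

lemma mip_add_smul_right (X Y Z : Matrix (Fin p) (Fin q) ℝ) (t : ℝ) :
    mip X (Y + t • Z) = mip X Y + t * mip X Z := by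
  rw [mip, mip, mip, Matrix.mul_add, Matrix.mul_smul, trace_add, trace_smul, smul_eq_mul]

lemma mip_vecMulVec (X : Matrix (Fin p) (Fin q) ℝ) (z : Fin p → ℝ) (v : Fin q → ℝ) :
    mip X (vecMulVec z v) = z ⬝ᵥ X *ᵥ v := by
  simp only [mip_eq_sum, vecMulVec_apply, dotProduct, mulVec, Finset.mul_sum]
  exact Finset.sum_congr rfl fun i _ => Finset.sum_congr rfl fun j _ => by ring

lemma frobNorm_nonneg (X : Matrix (Fin p) (Fin q) ℝ) : 0 ≤ frobNorm X :=
  Real.sqrt_nonneg _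

lemma frobNorm_sq (X : Matrix (Fin p) (Fin q) ℝ) : frobNorm X ^ 2 = mip X X := by
  rw [frobNorm, Real.sq_sqrt (by positivity), mip_eq_sum]
  simp only [sq]

lemma frobNorm_eq_zero {X : Matrix (Fin p) (Fin q) ℝ} : frobNorm X = 0 ↔ X = 0 := by
  rw [frobNorm, Real.sqrt_eq_zero (by positivity),
    Finset.sum_eq_zero_iff_of_nonneg fun _ _ => by positivity]
  simp only [Finset.mem_univ, true_implies,
    Finset.sum_eq_zero_iff_of_nonneg fun _ _ => sq_nonneg _, sq_eq_zero_iff]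
  exact ⟨fun h => Matrix.ext h, fun h i j => by simp [h]⟩

@[simp]
lemma frobNorm_zero : frobNorm (0 : Matrix (Fin p) (Fin q) ℝ) = 0 :=
  frobNorm_eq_zero.mpr rfl

lemma frobNorm_add_smul_sq (X Y : Matrix (Fin p) (Fin q) ℝ) (t : ℝ) :
    frobNorm (X + t • Y) ^ 2 = frobNorm X ^ 2 + 2 * t * mip X Y + t ^ 2 * frobNorm Y ^ 2 := by
  simp only [frobNorm_sq, mip_eq_sum, Matrix.add_apply, Matrix.smul_apply, smul_eq_mul,
    Finset.mul_sum, ← Finset.sum_add_distrib]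
  exact Finset.sum_congr rfl fun i _ => Finset.sum_congr rfl fun j _ => by ring

lemma l2norm_nonneg (v : Fin p → ℝ) : 0 ≤ l2norm v :=
  Real.sqrt_nonneg _

@[simp]
lemma l2norm_zero : l2norm (0 : Fin p → ℝ) = 0 := by
  simp [l2norm]

lemma l2norm_sq (v : Fin p → ℝ) : l2norm v ^ 2 = v ⬝ᵥ v := by
  rw [l2norm, Real.sq_sqrt (by positivity), dotProduct]
  simp only [sq]

lemma frobNorm_vecMulVec (z : Fin p → ℝ) (v : Fin q → ℝ) :
    frobNorm (vecMulVec z v) = l2norm z * l2norm v := by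
  rw [frobNorm, l2norm, l2norm, ← Real.sqrt_mul (by positivity), Finset.sum_mul_sum]
  simp only [vecMulVec_apply, mul_pow]

end Frobenius

lemma le_mul_mul_of_forall_two_mul_le {δ c α β : ℝ} (hα : 0 < α) (hβ : 0 < β)
    (h : ∀ t : ℝ, 2 * t * c ≤ δ * (α ^ 2 + t ^ 2 * β ^ 2)) : c ≤ δ * α * β := by
  refine le_of_mul_le_mul_left ?_ (by positivity : 0 < 2 * (α / β))
  calc 2 * (α / β) * c ≤ δ * (α ^ 2 + (α / β) ^ 2 * β ^ 2) := h (α / β)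
    _ = 2 * (α / β) * (δ * α * β) := by field_simp; ring

/-- The `r`-RIP with constant `δ` of `𝒜 Z = (m^{-1/2} ⟨Aᵢ, Z⟩)ᵢ`, written through
`‖𝒜 Z‖₂² = (1/m) ∑ᵢ ⟨Aᵢ, Z⟩²`. -/
def SatisfiesRIP {m p q : ℕ} (A : Fin m → Matrix (Fin p) (Fin q) ℝ) (r : ℕ) (δ : ℝ) : Prop :=
  ∀ Z : Matrix (Fin p) (Fin q) ℝ, Z.rank ≤ r →
    (1 - δ) * frobNorm Z ^ 2 ≤ (1 / (m : ℝ)) * ∑ i, (mip (A i) Z) ^ 2 ∧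
    (1 / (m : ℝ)) * ∑ i, (mip (A i) Z) ^ 2 ≤ (1 + δ) * frobNorm Z ^ 2

lemma sensing_add_smul_sq {m p q : ℕ} (A : Fin m → Matrix (Fin p) (Fin q) ℝ)
    (X Y : Matrix (Fin p) (Fin q) ℝ) (t : ℝ) :
    (1 / (m : ℝ)) * ∑ i, (mip (A i) (X + t • Y)) ^ 2 =
      (1 / (m : ℝ)) * ∑ i, (mip (A i) X) ^ 2
        + 2 * t * ((1 / (m : ℝ)) * ∑ i, mip (A i) X * mip (A i) Y)
        + t ^ 2 * ((1 / (m : ℝ)) * ∑ i, (mip (A i) Y) ^ 2) := by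
  simp only [mip_add_smul_right, Finset.mul_sum, ← Finset.sum_add_distrib]
  exact Finset.sum_congr rfl fun i _ => by ring

lemma sum_mip_mul_mip_vecMulVec {m p q : ℕ} (A : Fin m → Matrix (Fin p) (Fin q) ℝ)
    (X : Matrix (Fin p) (Fin q) ℝ) (z : Fin p → ℝ) (v : Fin q → ℝ) :
    (1 / (m : ℝ)) * ∑ i, mip (A i) X * mip (A i) (vecMulVec z v) =
      z ⬝ᵥ ((1 / (m : ℝ)) • ∑ i, mip (A i) X • A i *ᵥ v) := by
  simp only [mip_vecMulVec, dotProduct_smul, dotProduct_sum, smul_eq_mul]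

namespace SatisfiesRIP

variable {m p q r : ℕ} {A : Fin m → Matrix (Fin p) (Fin q) ℝ} {δ : ℝ}

lemma nonneg (hA : SatisfiesRIP A r δ) {Z : Matrix (Fin p) (Fin q) ℝ} (hrank : Z.rank ≤ r)
    (hZ : Z ≠ 0) : 0 ≤ δ := by
  obtain ⟨hlow, hup⟩ := hA Z hrank
  have hpos : 0 < frobNorm Z ^ 2 :=
    pow_pos ((frobNorm_nonneg Z).lt_of_ne' (frobNorm_eq_zero.not.mpr hZ)) 2
  nlinarith

lemma two_mul_mip_le (hA : SatisfiesRIP A r δ) {X Y : Matrix (Fin p) (Fin q) ℝ}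
    (hrank : ∀ t : ℝ, (X + t • Y).rank ≤ r)
    (horth : (1 / (m : ℝ)) * ∑ i, mip (A i) X * mip (A i) Y = 0) (t : ℝ) :
    2 * t * mip X Y ≤ δ * (frobNorm X ^ 2 + t ^ 2 * frobNorm Y ^ 2) := by
  have hup := (hA _ (hrank (-t))).2
  have hlow := (hA _ (hrank t)).1
  rw [sensing_add_smul_sq, horth, frobNorm_add_smul_sq] at hup hlow
  nlinarith

lemma mip_le (hA : SatisfiesRIP A r δ) {X Y : Matrix (Fin p) (Fin q) ℝ}
    (hrank : ∀ t : ℝ, (X + t • Y).rank ≤ r)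
    (horth : (1 / (m : ℝ)) * ∑ i, mip (A i) X * mip (A i) Y = 0) :
    mip X Y ≤ δ * frobNorm X * frobNorm Y := by
  rcases (frobNorm_nonneg X).eq_or_lt with hX | hX
  · simp [frobNorm_eq_zero.mp hX.symm, mip]
  rcases (frobNorm_nonneg Y).eq_or_lt with hY | hY
  · simp [frobNorm_eq_zero.mp hY.symm, mip]
  exact le_mul_mul_of_forall_two_mul_le hX hY (hA.two_mul_mip_le hrank horth)

end SatisfiesRIP

theorem rank_one_sensing_critical_point_bound_general
    (n m : ℕ)
    (A : Fin m → Matrix (Fin n) (Fin n) ℝ)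
    (δ : ℝ)
    (hRIP : ∀ Z : Matrix (Fin n) (Fin n) ℝ, Z.rank ≤ 2 →
      (1 - δ) * frobNorm Z ^ 2 ≤ (1 / (m : ℝ)) * ∑ i, (mip (A i) Z) ^ 2 ∧
      (1 / (m : ℝ)) * ∑ i, (mip (A i) Z) ^ 2 ≤ (1 + δ) * frobNorm Z ^ 2)
    (xstar x : Fin n → ℝ)
    (hcrit : (1 / (m : ℝ)) • ∑ i,
      mip (A i) (Matrix.vecMulVec x x - Matrix.vecMulVec xstar xstar) •
        Matrix.mulVec (A i) x = 0) :
    frobNorm ((Matrix.vecMulVec x x - Matrix.vecMulVec xstar xstar) *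
        Matrix.vecMulVec x x) ≤
      δ * frobNorm (Matrix.vecMulVec x x - Matrix.vecMulVec xstar xstar) * l2norm x ^ 2 := by
  set D := vecMulVec x x - vecMulVec xstar xstar
  have hRIP : SatisfiesRIP A 2 δ := hRIP
  have hrankD : D.rank ≤ 2 := rank_vecMulVec_sub_vecMulVec_le _ _ _ _
  rw [mul_vecMulVec, frobNorm_vecMulVec]
  by_cases hD : D = 0
  · simp [hD]
  have hδ : 0 ≤ δ := hRIP.nonneg hrankD hD
  have hrank : ∀ t : ℝ, (D + t • vecMulVec (D *ᵥ x) x).rank ≤ 2 := fun t => by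
    have hfactor : D + t • vecMulVec (D *ᵥ x) x = D * (1 + t • vecMulVec x x) := by
      rw [Matrix.mul_add, Matrix.mul_one, Matrix.mul_smul, mul_vecMulVec]
    rw [hfactor]
    exact (rank_mul_le_left _ _).trans hrankD
  have horth : (1 / (m : ℝ)) * ∑ i, mip (A i) D * mip (A i) (vecMulVec (D *ᵥ x) x) = 0 := by
    rw [sum_mip_mul_mip_vecMulVec, hcrit, dotProduct_zero]
  have hcorr := hRIP.mip_le hrank horth
  rw [mip_vecMulVec, ← l2norm_sq, frobNorm_vecMulVec] at hcorr
  have hDx : l2norm (D *ᵥ x) ≤ δ * frobNorm D * l2norm x := by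
    nlinarith [l2norm_nonneg (D *ᵥ x),
      mul_nonneg (mul_nonneg hδ (frobNorm_nonneg D)) (l2norm_nonneg x)]
  calc l2norm (D *ᵥ x) * l2norm x ≤ δ * frobNorm D * l2norm x * l2norm x :=
        mul_le_mul_of_nonneg_right hDx (l2norm_nonneg x)
    _ = δ * frobNorm D * l2norm x ^ 2 := by ring

/-- **Critical points of rank-1 matrix sensing stay close to the truth in their own span.**
If the symmetric sensing operator satisfies the `2`-RIP with constant `δ₂ < 1`, then every
critical point `x` of `f(x) = (1/4m) ∑ᵢ (⟨Aᵢ, xxᵀ⟩ − ⟨Aᵢ, x⋆x⋆ᵀ⟩)²` satisfies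
`‖(xxᵀ − x⋆x⋆ᵀ)xxᵀ‖_F ≤ δ₂‖xxᵀ − x⋆x⋆ᵀ‖_F‖x‖₂²`. -/
theorem rank_one_sensing_critical_point_bound
    (n m : ℕ)
    (A : Fin m → Matrix (Fin n) (Fin n) ℝ)
    (hsym : ∀ i, (A i)ᵀ = A i)
    (δ : ℝ) (hδ : δ < 1)
    (hRIP : ∀ Z : Matrix (Fin n) (Fin n) ℝ, Z.rank ≤ 2 →
      (1 - δ) * frobNorm Z ^ 2 ≤ (1 / (m : ℝ)) * ∑ i, (mip (A i) Z) ^ 2 ∧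
      (1 / (m : ℝ)) * ∑ i, (mip (A i) Z) ^ 2 ≤ (1 + δ) * frobNorm Z ^ 2)
    (xstar x : Fin n → ℝ)
    (hcrit : (1 / (m : ℝ)) • ∑ i,
      mip (A i) (Matrix.vecMulVec x x - Matrix.vecMulVec xstar xstar) •
        Matrix.mulVec (A i) x = 0) :
    frobNorm ((Matrix.vecMulVec x x - Matrix.vecMulVec xstar xstar) *
        Matrix.vecMulVec x x) ≤
      δ * frobNorm (Matrix.vecMulVec x x - Matrix.vecMulVec xstar xstar) * l2norm x ^ 2 :=
  rank_one_sensing_critical_point_bound_general n m A δ hRIP xstar x hcrit
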